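/- In ℝ^d (d ≥ 2), every nonzero point x in (B(0,1) \ B(0,√(2/3))) ∩ B(e_1, √5/2) satisfies ⟨x/‖x‖₂, e_1⟩ ≥ √(1 − 1077/1152), i.e., the set is contained in the cone subtended by the spherical cap of angular radius r with sin r = √1077/(24√2). -/

import Mathlib

open Metric

/-! If `‖x‖ ≥ a` and `‖x - e‖ ≤ R` for a unit vector `e`, the law of cosines gives
`2⟪x, e⟫ ≥ ‖x‖² + 1 - R²`, so `cos ∠(x, e) ≥ (‖x‖² + 1 - R²) / (2‖x‖)`. For `R ≥ 1` the right
side increases with `‖x‖`, so it is smallest on the sphere `‖x‖ = a`, where it is the cosine of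
the angle at which the spheres `‖x‖ = a` and `‖x - e‖ = R` meet. With `a² = 2/3` and `R² = 5/4`
its square is `75/1152 = 1 - 1077/1152`. -/

section InnerProductSpace

variable {E : Type*} [NormedAddCommGroup E] [InnerProductSpace ℝ E]

lemma norm_sq_add_one_sub_sq_le_two_mul_inner {x e : E} {R : ℝ} (he : ‖e‖ = 1)
    (hxe : ‖x - e‖ ≤ R) : ‖x‖ ^ 2 + 1 - R ^ 2 ≤ 2 * inner ℝ x e := by
  have hsq : ‖x - e‖ ^ 2 = ‖x‖ ^ 2 - 2 * inner ℝ x e + 1 := by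
    rw [norm_sub_sq_real, he]; ring
  nlinarith [norm_nonneg (x - e)]

lemma div_le_inner_normalize_of_norm_sub_le {x e : E} {a R : ℝ} (he : ‖e‖ = 1)
    (hR : 1 ≤ R) (ha : 0 < a) (hax : a ≤ ‖x‖) (hxe : ‖x - e‖ ≤ R) :
    (a ^ 2 + 1 - R ^ 2) / (2 * a) ≤ inner ℝ (‖x‖⁻¹ • x) e := by
  have hx : 0 < ‖x‖ := ha.trans_le hax
  have hinner := norm_sq_add_one_sub_sq_le_two_mul_inner he hxe
  rw [real_inner_smul_left, inv_mul_eq_div, le_div_iff₀ hx, div_mul_eq_mul_div,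
    div_le_iff₀ (by positivity)]
  -- `(a² - δ) t - (t² - δ) a = (a - t)(a t + δ)` with `δ = R² - 1 ≥ 0`
  nlinarith [mul_nonneg (sub_nonneg.2 hax) (add_nonneg (mul_pos ha hx).le
    (sub_nonneg.2 (one_le_pow₀ (n := 2) hR)))]

end InnerProductSpace

lemma sqrt_one_sub_eq_cone_cosine :
    Real.sqrt (1 - 1077 / 1152) =
      (Real.sqrt (2 / 3) ^ 2 + 1 - (Real.sqrt 5 / 2) ^ 2) / (2 * Real.sqrt (2 / 3)) := by
  have ha2 : Real.sqrt (2 / 3) ^ 2 = 2 / 3 := Real.sq_sqrt (by norm_num)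
  rw [div_pow, Real.sq_sqrt (by norm_num : (0 : ℝ) ≤ 5), ha2,
    Real.sqrt_eq_iff_mul_self_eq_of_pos (by positivity)]
  field_simp
  rw [ha2]
  norm_num

/-- Every nonzero point of `(B(0,1) \ B(0,√(2/3))) ∩ B(e₁, √5/2)` lies in the cone
over the spherical cap of angular radius `r` with `sin r = √1077/(24√2)`. -/
theorem middle_piece_in_cone (d : ℕ) (hd : 2 ≤ d)
    (x : EuclideanSpace ℝ (Fin d))
    (h1 : x ∈ closedBall (0 : EuclideanSpace ℝ (Fin d)) 1 \
      closedBall (0 : EuclideanSpace ℝ (Fin d)) (Real.sqrt (2 / 3)))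
    (h2 : x ∈ closedBall (EuclideanSpace.single (⟨0, by omega⟩ : Fin d) (1 : ℝ))
      (Real.sqrt 5 / 2)) :
    Real.sqrt (1 - 1077 / 1152) ≤
      inner ℝ (‖x‖⁻¹ • x) (EuclideanSpace.single (⟨0, by omega⟩ : Fin d) (1 : ℝ)) := by
  have hx : Real.sqrt (2 / 3) ≤ ‖x‖ := by
    have h := h1.2
    rw [mem_closedBall, dist_zero_right, not_le] at h
    exact h.le
  have hR : 1 ≤ Real.sqrt 5 / 2 := by
    rw [le_div_iff₀ two_pos, Real.le_sqrt (by norm_num) (by norm_num)]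
    norm_num
  rw [sqrt_one_sub_eq_cone_cosine]
  exact div_le_inner_normalize_of_norm_sub_le (by simp) hR (by positivity) hx
    (by simpa [dist_eq_norm] using h2)
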